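/- Weakly ramified embedding dimension: let p be prime, n ≥ 1, 2 ≤ h ≤ p^n, m = h−1, k = max(m, p^n−m), w(s) = [s ≥ k]. Define 𝔈 = { u ∈ {0,...,p^n−1} : w(u) > w(u−s) + w(s) for all s with 0 ≺ s ≺ u }. Then |𝔈| = n + 2 + α(k) − γ(k), where α(k) is the number of j with v_p(k) < j ≤ n−1 and k_{(j)} ≠ p−1, and γ(k) = 1 if p = 2 and k = 2^{n−1}, else γ(k) = 0. -/

import Mathlib

/-- The `i`-th base-`p` digit of `s`. -/
def dig (p s i : ℕ) : ℕ := s / p ^ i % p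

/-- Digitwise partial order on base-`p` expansions: `s ⪯ t`. -/
def preceq (p s t : ℕ) : Prop := ∀ i, dig p s i ≤ dig p t i

/-- `α(k)`: the number of indices `j` with `v_p(k) < j ≤ n−1` whose base-`p` digit of `k`
is not `p−1`. -/
def alphaCount (p n k : ℕ) : ℕ :=
  ((Finset.Ioc (padicValNat p k) (n - 1)).filter (fun j => dig p k j ≠ p - 1)).card

/-- `γ(k) = 1` if `p = 2` and `k = 2^{n−1}`, else `0`. -/
def gammaCount (p n k : ℕ) : ℕ :=
  if p = 2 ∧ k = 2 ^ (n - 1) then 1 else 0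

/-!
Digitwise, every minor `s ⪯ u` is divisible by `q = p ^ v_p(u)`, so for `u ≠ 0` the smallest
nonzero minor is `q` and the largest proper one is `u - q`. Hence `u` lies in `𝔈` iff `u = 0`,
or `u` is a power of `p` (no proper nonzero minors at all), or `k ≤ u` and `u - q < k`.
The powers of `p` below `k` are `p ^ 0, …, p ^ (n - 1)`, except `p ^ (n - 1)` when it equals `k`,
which forces `p = 2` since `p ^ n ≤ 2k`. An element of the last kind is `k` rounded up to a multiple
of `p ^ j` with `j = v_p(u)`: for `j = v_p(k)` this is `k` itself, and for `j > v_p(k)` the result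
`p ^ j (⌊k / p ^ j⌋ + 1)` has valuation exactly `j` iff `k_(j) ≠ p - 1`, and is then below `p ^ n`
as long as `j < n`.
-/

open Finset

section Digits

variable {p : ℕ}

lemma mod_pow_le_mod_pow_of_preceq {s u : ℕ} (h : preceq p s u) (j : ℕ) :
    s % p ^ j ≤ u % p ^ j := by
  induction j with
  | zero => simp only [pow_zero, Nat.mod_one, le_refl]
  | succ j ih =>
    rw [Nat.mod_pow_succ, Nat.mod_pow_succ]
    exact add_le_add ih (Nat.mul_le_mul_left _ (h j))

lemma le_of_preceq (hp : 1 < p) {s u : ℕ} (h : preceq p s u) : s ≤ u := by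
  have hlt : ∀ x, x ≤ s + u → x < p ^ (s + u) := fun x hx =>
    (Nat.lt_pow_self hp).trans_le' (by omega)
  simpa only [Nat.mod_eq_of_lt (hlt s (by omega)), Nat.mod_eq_of_lt (hlt u (by omega))]
    using mod_pow_le_mod_pow_of_preceq h (s + u)

lemma pow_dvd_of_preceq {s u j : ℕ} (h : preceq p s u) (hu : p ^ j ∣ u) : p ^ j ∣ s := by
  have := mod_pow_le_mod_pow_of_preceq h j
  rw [Nat.mod_eq_zero_of_dvd hu] at this
  exact Nat.dvd_of_mod_eq_zero (Nat.le_zero.mp this)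

lemma pow_padicValNat_le_of_preceq {s u : ℕ} (h : preceq p s u) (hs : s ≠ 0) :
    p ^ padicValNat p u ≤ s :=
  Nat.le_of_dvd (Nat.pos_of_ne_zero hs) (pow_dvd_of_preceq h pow_padicValNat_dvd)

lemma dig_pow_le (hp : 1 < p) (i j : ℕ) : dig p (p ^ i) j ≤ if j = i then 1 else 0 := by
  unfold dig
  rcases lt_trichotomy j i with hji | rfl | hij
  · rw [if_neg hji.ne, Nat.pow_div hji.le (by omega), ← Nat.sub_add_cancel (Nat.sub_pos_of_lt hji),
      pow_succ, Nat.mul_mod_left]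
  · rw [Nat.div_self (by positivity), if_pos rfl]
    exact Nat.mod_le 1 p
  · rw [Nat.div_eq_of_lt (Nat.pow_lt_pow_right hp hij)]
    simp

variable [hp : Fact p.Prime]

lemma dig_padicValNat_ne_zero {u : ℕ} (hu : u ≠ 0) : dig p u (padicValNat p u) ≠ 0 := by
  intro h
  apply pow_succ_padicValNat_not_dvd (p := p) hu
  rw [pow_succ]
  exact Nat.mul_dvd_of_dvd_div pow_padicValNat_dvd (Nat.dvd_of_mod_eq_zero h)

lemma pow_padicValNat_preceq {u : ℕ} (hu : u ≠ 0) : preceq p (p ^ padicValNat p u) u := by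
  intro j
  refine (dig_pow_le hp.out.one_lt _ j).trans ?_
  split_ifs with hj
  · exact Nat.one_le_iff_ne_zero.mpr (hj ▸ dig_padicValNat_ne_zero hu)
  · exact Nat.zero_le _

lemma add_pow_padicValNat_le_of_preceq {s u : ℕ} (h : preceq p s u) (hne : s ≠ u) :
    s + p ^ padicValNat p u ≤ u := by
  have hsu := le_of_preceq hp.out.one_lt h
  have hdvd : p ^ padicValNat p u ∣ u - s :=
    Nat.dvd_sub pow_padicValNat_dvd (pow_dvd_of_preceq h pow_padicValNat_dvd)
  have := Nat.le_of_dvd (by omega) hdvd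
  omega

end Digits

lemma step_gt_add_step_iff {k a b c : ℕ} :
    ((if k ≤ a then 1 else 0 : ℤ) > (if k ≤ b then 1 else 0) + (if k ≤ c then 1 else 0)) ↔
      k ≤ a ∧ b < k ∧ c < k := by
  split_ifs <;> omega

lemma forall_proper_minor_iff {p : ℕ} [hp : Fact p.Prime] {k N u : ℕ} (hu : u < N) :
    (∀ s, s < N → s ≠ 0 → preceq p s u → s ≠ u → k ≤ u ∧ u - s < k ∧ s < k) ↔
      u = 0 ∨ (∃ i, u = p ^ i) ∨ (k ≤ u ∧ u - p ^ padicValNat p u < k) := by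
  constructor
  · intro H
    by_cases hu0 : u = 0
    · exact .inl hu0
    by_cases hpow : p ^ padicValNat p u = u
    · exact .inr (.inl ⟨_, hpow.symm⟩)
    have hq := pow_padicValNat_preceq (p := p) hu0
    obtain ⟨hku, hsub, -⟩ :=
      H _ ((le_of_preceq hp.out.one_lt hq).trans_lt hu) (pow_ne_zero _ hp.out.ne_zero) hq hpow
    exact .inr (.inr ⟨hku, hsub⟩)
  · rintro (rfl | ⟨i, rfl⟩ | ⟨hku, hsub⟩) s - hs hsu hne
    · exact absurd (Nat.le_zero.mp (le_of_preceq hp.out.one_lt hsu)) hs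
    · have := add_pow_padicValNat_le_of_preceq hsu hne
      rw [padicValNat.prime_pow] at this
      omega
    · have h1 := add_pow_padicValNat_le_of_preceq hsu hne
      have h2 := pow_padicValNat_le_of_preceq hsu hs
      omega

lemma Nat.dvd_add_one_iff_mod_eq_sub_one {p x : ℕ} (hp : 0 < p) :
    p ∣ x + 1 ↔ x % p = p - 1 := by
  rw [Nat.dvd_iff_mod_eq_zero, Nat.add_mod]
  rcases Nat.lt_or_ge 1 p with h | h
  · rw [Nat.mod_eq_of_lt h]
    have := Nat.mod_lt x hp
    constructor
    · intro h0
      by_contra hne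
      rw [Nat.mod_eq_of_lt (by omega)] at h0
      omega
    · intro he
      rw [he, Nat.sub_add_cancel hp, Nat.mod_self]
  · obtain rfl : p = 1 := by omega
    simp

lemma eq_or_eq_mul_div_add_one_of_dvd {d k u : ℕ} (hdu : d ∣ u) (hku : k ≤ u)
    (huk : u < k + d) : (d ∣ k ∧ u = k) ∨ (¬ d ∣ k ∧ u = d * (k / d + 1)) := by
  by_cases hdk : d ∣ k
  · refine .inl ⟨hdk, ?_⟩
    have := Nat.eq_zero_of_dvd_of_lt (Nat.dvd_sub hdu hdk) (by omega)
    omega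
  · refine .inr ⟨hdk, ?_⟩
    obtain ⟨c, rfl⟩ := hdu
    have hmod := Nat.div_add_mod k d
    have hr : k % d ≠ 0 := fun h => hdk (Nat.dvd_of_mod_eq_zero h)
    have hrd : k % d < d := Nat.mod_lt k (by omega)
    have hlo : d * (k / d) < d * c := by omega
    have hhi : d * c < d * (k / d + 2) := by rw [mul_add]; omega
    have := Nat.lt_of_mul_lt_mul_left hlo
    have := Nat.lt_of_mul_lt_mul_left hhi
    rw [show c = k / d + 1 by omega]

section RoundUp

variable {p : ℕ} [hp : Fact p.Prime] {k j : ℕ}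

lemma padicValNat_mul_div_add_one (hj : dig p k j ≠ p - 1) :
    padicValNat p (p ^ j * (k / p ^ j + 1)) = j := by
  have hndvd : ¬ p ∣ k / p ^ j + 1 := (Nat.dvd_add_one_iff_mod_eq_sub_one hp.out.pos).not.mpr hj
  rw [padicValNat.mul (pow_ne_zero _ hp.out.ne_zero) (Nat.succ_ne_zero _), padicValNat.prime_pow,
    padicValNat.eq_zero_of_not_dvd hndvd, add_zero]

lemma mul_div_add_one_lt_pow {n : ℕ} (hkn : k < p ^ n) (hjn : j < n)
    (hj : dig p k j ≠ p - 1) : p ^ j * (k / p ^ j + 1) < p ^ n := by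
  have hsplit : p ^ n = p ^ j * p ^ (n - j) := by rw [← pow_add, Nat.add_sub_cancel' hjn.le]
  rw [hsplit] at hkn ⊢
  have hlt : k / p ^ j < p ^ (n - j) := Nat.div_lt_of_lt_mul hkn
  have hne : k / p ^ j + 1 ≠ p ^ (n - j) := fun h =>
    hj ((Nat.dvd_add_one_iff_mod_eq_sub_one hp.out.pos).mp (h ▸ dvd_pow_self p (by omega)))
  exact Nat.mul_lt_mul_of_pos_left (by omega) (pow_pos hp.out.pos j)

lemma upper_jump_iff {n u : ℕ} (hk : k ≠ 0) (hkn : k < p ^ n) :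
    (u < p ^ n ∧ k ≤ u ∧ u - p ^ padicValNat p u < k) ↔
      u ∈ insert k (((Ioc (padicValNat p k) (n - 1)).filter fun j => dig p k j ≠ p - 1).image
        fun j => p ^ j * (k / p ^ j + 1)) := by
  simp only [mem_insert, mem_image, mem_filter, mem_Ioc]
  constructor
  · rintro ⟨hun, hku, hsub⟩
    have hq : p ^ padicValNat p u ≤ u := Nat.le_of_dvd (by omega) pow_padicValNat_dvd
    rcases eq_or_eq_mul_div_add_one_of_dvd (pow_padicValNat_dvd (p := p)) hku (by omega) with
      ⟨-, rfl⟩ | ⟨hndvd, hu⟩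
    · exact .inl rfl
    refine .inr ⟨padicValNat p u, ⟨⟨?_, ?_⟩, fun hdig => ?_⟩, hu.symm⟩
    · by_contra! hle
      exact hndvd ((pow_dvd_pow p hle).trans pow_padicValNat_dvd)
    · have := (Nat.pow_lt_pow_iff_right hp.out.one_lt).mp (hq.trans_lt hun)
      omega
    · refine pow_succ_padicValNat_not_dvd (p := p) (n := u) (by omega) ?_
      rw [pow_succ]
      conv_rhs => rw [hu]
      exact mul_dvd_mul_left _ ((Nat.dvd_add_one_iff_mod_eq_sub_one hp.out.pos).mpr hdig)
  · rintro (rfl | ⟨j, ⟨⟨hkj, hjn⟩, hdig⟩, rfl⟩)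
    · exact ⟨hkn, le_rfl, Nat.sub_lt (Nat.pos_of_ne_zero hk) (pow_pos hp.out.pos _)⟩
    have hndvd : ¬ p ^ j ∣ k := fun h => by
      have := (padicValNat_dvd_iff_le hk).mp h
      omega
    have hmod := Nat.div_add_mod k (p ^ j)
    have hrj := Nat.mod_lt k (pow_pos hp.out.pos j)
    have hr : k % p ^ j ≠ 0 := fun h => hndvd (Nat.dvd_of_mod_eq_zero h)
    rw [padicValNat_mul_div_add_one hdig, mul_add, mul_one]
    refine ⟨mul_div_add_one_lt_pow hkn (by omega) hdig |>.trans_eq' (by ring), ?_, ?_⟩ <;> omega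

end RoundUp

lemma pow_lt_iff_lt_sub_gammaCount {p n k : ℕ} (hp : p.Prime) (hn : 1 ≤ n) (hk : p ^ n ≤ 2 * k)
    (hkn : k < p ^ n) (i : ℕ) : p ^ i < k ↔ i < n - gammaCount p n k := by
  have hsplit : p ^ n = p * p ^ (n - 1) := by rw [← pow_succ', Nat.sub_add_cancel hn]
  unfold gammaCount
  split_ifs with hγ
  · obtain ⟨rfl, rfl⟩ := hγ
    exact Nat.pow_lt_pow_iff_right (by norm_num)
  have h2p : 2 * p ^ (n - 1) ≤ p * p ^ (n - 1) := Nat.mul_le_mul_right _ hp.two_le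
  have hlt : p ^ (n - 1) < k := by
    refine lt_of_le_of_ne (by omega) fun he => hγ ?_
    have : p ≤ 2 := Nat.le_of_mul_le_mul_right (by omega) (pow_pos hp.pos (n - 1))
    obtain rfl : p = 2 := le_antisymm this hp.two_le
    exact ⟨rfl, he.symm⟩
  rw [Nat.sub_zero]
  constructor
  · intro hi
    exact (Nat.pow_lt_pow_iff_right hp.one_lt).mp (hi.trans hkn)
  · intro hi
    exact (Nat.pow_le_pow_right hp.pos (by omega)).trans_lt hlt

open Classical in
lemma filter_jump_eq {p n k : ℕ} [hp : Fact p.Prime] (hn : 1 ≤ n) (hk : k ≠ 0)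
    (hk2 : p ^ n ≤ 2 * k) (hkn : k < p ^ n) :
    (range (p ^ n)).filter (fun u => u = 0 ∨ (∃ i, u = p ^ i) ∨
        (k ≤ u ∧ u - p ^ padicValNat p u < k)) =
      insert 0 ((range (n - gammaCount p n k)).image (p ^ ·) ∪
        insert k (((Ioc (padicValNat p k) (n - 1)).filter fun j => dig p k j ≠ p - 1).image
          fun j => p ^ j * (k / p ^ j + 1))) := by
  ext u
  rw [mem_filter, mem_range, mem_insert, mem_union, ← upper_jump_iff hk hkn, mem_image]
  simp only [mem_range, ← pow_lt_iff_lt_sub_gammaCount hp.out hn hk2 hkn]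
  constructor
  · rintro ⟨hun, rfl | ⟨i, rfl⟩ | hupper⟩
    · exact .inl rfl
    · by_cases hik : p ^ i < k
      · exact .inr (.inl ⟨i, hik, rfl⟩)
      · refine .inr (.inr ⟨hun, by omega, ?_⟩)
        rw [padicValNat.prime_pow]
        omega
    · exact .inr (.inr ⟨hun, hupper⟩)
  · rintro (rfl | ⟨i, hik, rfl⟩ | ⟨hun, hupper⟩)
    · exact ⟨pow_pos hp.out.pos n, .inl rfl⟩
    · exact ⟨hik.trans hkn, .inr (.inl ⟨i, rfl⟩)⟩
    · exact ⟨hun, .inr (.inr hupper)⟩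

open Classical in
lemma card_filter_jump {p n k : ℕ} [hp : Fact p.Prime] (hn : 1 ≤ n) (hk : k ≠ 0)
    (hk2 : p ^ n ≤ 2 * k) (hkn : k < p ^ n) :
    ((range (p ^ n)).filter (fun u => u = 0 ∨ (∃ i, u = p ^ i) ∨
        (k ≤ u ∧ u - p ^ padicValNat p u < k))).card =
      n - gammaCount p n k + 2 + alphaCount p n k := by
  set A := (Ioc (padicValNat p k) (n - 1)).filter fun j => dig p k j ≠ p - 1
  set P := (range (n - gammaCount p n k)).image (p ^ ·)
  set U := insert k (A.image fun j => p ^ j * (k / p ^ j + 1))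
  have hP : ∀ u ∈ P, 0 < u ∧ u < k := by
    simp only [P, mem_image, mem_range, ← pow_lt_iff_lt_sub_gammaCount hp.out hn hk2 hkn]
    rintro _ ⟨i, hi, rfl⟩
    exact ⟨pow_pos hp.out.pos i, hi⟩
  have hU : ∀ u ∈ U, k ≤ u := fun u hu => ((upper_jump_iff hk hkn).mpr hu).2.1
  have h0 : 0 ∉ P ∪ U := by
    rw [mem_union]
    rintro (h | h)
    · exact (hP 0 h).1.ne rfl
    · exact hk (Nat.le_zero.mp (hU 0 h))
  have hPU : Disjoint P U := disjoint_left.mpr fun u hP' hU' => by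
    have := hP u hP'
    have := hU u hU'
    omega
  have hkA : k ∉ A.image fun j => p ^ j * (k / p ^ j + 1) := by
    rw [mem_image]
    rintro ⟨j, -, hj⟩
    exact (Nat.lt_mul_div_succ k (pow_pos hp.out.pos j)).ne' hj
  have hinj : Set.InjOn (fun j => p ^ j * (k / p ^ j + 1)) A := fun a ha b hb hab => by
    rw [← padicValNat_mul_div_add_one (mem_filter.mp ha).2,
      ← padicValNat_mul_div_add_one (mem_filter.mp hb).2]
    exact congrArg _ hab
  rw [filter_jump_eq hn hk hk2 hkn, card_insert_of_notMem h0, card_union_of_disjoint hPU,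
    card_image_of_injective _ (Nat.pow_right_injective hp.out.two_le), card_range,
    card_insert_of_notMem hkA, card_image_of_injOn hinj, show #A = alphaCount p n k from rfl]
  ring

open Classical in
theorem stmt_13 (p n : ℕ) (hp : p.Prime) (hn : 1 ≤ n) (h : ℕ)
    (hh1 : 2 ≤ h) (hh2 : h ≤ p ^ n)
    (m k : ℕ) (hm : m = h - 1) (hk : k = max m (p ^ n - m))
    (w : ℕ → ℤ)
    (hw : ∀ s, w s = if k ≤ s then 1 else 0) :
    (((Finset.range (p ^ n)).filter (fun u =>
        ∀ s, s < p ^ n → s ≠ 0 → preceq p s u → s ≠ u →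
          w u > w (u - s) + w s)).card : ℤ)
      = n + 2 + alphaCount p n k - gammaCount p n k := by
  have : Fact p.Prime := ⟨hp⟩
  have hk0 : k ≠ 0 := by omega
  have hk2 : p ^ n ≤ 2 * k := by omega
  have hkn : k < p ^ n := by omega
  have hγ : gammaCount p n k ≤ n := by unfold gammaCount; split_ifs <;> omega
  simp only [hw, step_gt_add_step_iff]
  rw [filter_congr fun u hu => forall_proper_minor_iff (mem_range.mp hu),
    card_filter_jump hn hk0 hk2 hkn]
  push_cast [hγ]
  ring
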